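/- Let n ≥ 1, let μ be a unit pure quaternion, ω = exp(−2πμ/n), and let c = (c⁽⁰⁾,…,c⁽ⁿ⁻¹⁾) be a real vector. Let C = circ(c), viewed as an n×n quaternion matrix. Then F_μ C F_μᴴ is the diagonal matrix Diag(λ₀,…,λ_{n−1}) with λ_k = Σ_{v=0}^{n−1} ω^{kv} c⁽ᵛ⁾; equivalently, the diagonal equals √n·(F_μ c). -/

import Mathlib

/-!
Since `μ² = -1`, `Complex.lift` embeds `ℂ` into `ℍ` by `i ↦ μ`, and this embedding sends the
primitive `n`-th root of unity `exp(-2πi/n)` to `ω`; hence `ω` has order exactly `n`. Moreover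
`star ω = exp(-2π star μ / n) = ω⁻¹`. With these two facts the classical argument goes through
although `ℍ` is not commutative, because only powers of `ω` and the central real entries of `c`
are ever multiplied: the rows of `√n F_μ` are orthogonal by the geometric-sum identity, so `F_μ`
is unitary, and reindexing `v ↦ v + w` shows `F_μ C = Diag(λ) F_μ`.
-/

open Quaternion Matrix

/-- `ω = exp(−2πμ/n)`, the quaternion exponential of `(−2π/n)·μ`. -/
noncomputable def qomega (n : ℕ) (μ : ℍ[ℝ]) : ℍ[ℝ] :=
  NormedSpace.exp ((-(2 * Real.pi) / n : ℝ) • μ)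

/-- The `n×n` discrete quaternion Fourier transform matrix,
`(F_μ)_{uv} = (1/√n)·ω^{uv}` for `u, v = 0, …, n−1`. -/
noncomputable def qdft (n : ℕ) (μ : ℍ[ℝ]) : Matrix (Fin n) (Fin n) ℍ[ℝ] :=
  Matrix.of fun u v => ((Real.sqrt n)⁻¹ : ℝ) • (qomega n μ) ^ ((u : ℕ) * (v : ℕ))

instance {R : Type*} [CommRing R] [Star R] [TrivialStar R] : StarModule R ℍ[R] :=
  ⟨fun r a => by rw [Quaternion.star_smul, star_trivial r]⟩

namespace Matrix

variable {R : Type*}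

def dftMatrix [Monoid R] (n : ℕ) (x : R) : Matrix (Fin n) (Fin n) R :=
  of fun u v => x ^ ((u : ℕ) * v)

variable {n : ℕ}

theorem dftMatrix_mul_circulant [Ring R] {x : R} (hx : x ^ n = 1) {c : Fin n → R}
    (hc : ∀ v, Commute x (c v)) :
    dftMatrix n x * circulant c =
      diagonal (fun k : Fin n => ∑ v : Fin n, x ^ ((k : ℕ) * v) * c v) * dftMatrix n x := by
  ext u w
  have : NeZero n := .of_pos u.pos
  have hxu : (x ^ (u : ℕ)) ^ n = 1 := by rw [← pow_mul, mul_comm, pow_mul, hx, one_pow]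
  rw [diagonal_mul, Finset.sum_mul, mul_apply]
  refine (Fintype.sum_equiv (Equiv.addRight w) _ _ fun d => ?_).symm
  simp only [dftMatrix, of_apply, Equiv.coe_addRight, circulant_apply, add_sub_cancel_right,
    pow_mul, Fin.val_add, ← pow_eq_pow_mod _ hxu, pow_add]
  rw [mul_assoc, mul_assoc, (((hc d).pow_left (u : ℕ)).pow_left (w : ℕ)).eq]

theorem dftMatrix_mul_conjTranspose [DivisionRing R] [StarRing R] {x : R}
    (hx : orderOf x = n) (hstar : star x = x⁻¹) :
    dftMatrix n x * (dftMatrix n x)ᴴ = n • 1 := by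
  ext u w
  have hxn : x ^ n = 1 := hx ▸ pow_orderOf_eq_one x
  have hx0 : x ≠ 0 := by rintro rfl; simp [zero_pow u.pos.ne'] at hxn
  set a := x ^ (u : ℕ) * (x ^ (w : ℕ))⁻¹
  have hcomm : Commute (x ^ (u : ℕ)) (x ^ (w : ℕ))⁻¹ := ((Commute.refl x).pow_pow _ _).inv_right₀
  have hsum : (dftMatrix n x * (dftMatrix n x)ᴴ) u w = ∑ i ∈ Finset.range n, a ^ i := by
    rw [mul_apply, ← Fin.sum_univ_eq_sum_range]
    simp only [dftMatrix, conjTranspose_apply, of_apply, pow_mul, star_pow, hstar, inv_pow]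
    exact Finset.sum_congr rfl fun v _ => by rw [hcomm.mul_pow, inv_pow]
  rw [hsum, smul_apply, one_apply]
  obtain rfl | huw := eq_or_ne u w
  · simp [a, mul_inv_cancel₀ (pow_ne_zero _ hx0)]
  · have ha : a ≠ 1 := fun h => huw <| Fin.ext <| pow_injOn_Iio_orderOf
      (by simp [hx]) (by simp [hx]) (mul_inv_eq_one₀ (pow_ne_zero _ hx0) |>.mp h)
    have han : a ^ n = 1 := by
      rw [hcomm.mul_pow, inv_pow, pow_right_comm, hxn, pow_right_comm, hxn, one_pow, one_pow,
        inv_one, mul_one]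
    simp [huw, geom_sum_eq ha, han]

end Matrix

theorem Quaternion.mul_self_eq_neg_one {μ : ℍ[ℝ]} (hpure : μ.re = 0) (hunit : ‖μ‖ = 1) :
    μ * μ = -1 := by
  rw [← sq, sq_eq_neg_normSq.mpr hpure, normSq_eq_norm_mul_self, hunit, mul_one, coe_one]

section qdft

variable {μ : ℍ[ℝ]}

theorem qomega_eq_lift_exp (hpure : μ.re = 0) (hunit : ‖μ‖ = 1) (n : ℕ) :
    qomega n μ = Complex.lift ⟨μ, mul_self_eq_neg_one hpure hunit⟩
      (Complex.exp (2 * Real.pi * Complex.I / n))⁻¹ := by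
  set φ := Complex.lift ⟨μ, mul_self_eq_neg_one hpure hunit⟩
  have hφ : Continuous φ := φ.toLinearMap.continuous_of_finiteDimensional
  have harg : -(2 * Real.pi * Complex.I / n) = (-(2 * Real.pi) / n : ℝ) • Complex.I := by
    rw [Complex.real_smul]; push_cast; ring
  rw [← Complex.exp_neg, harg, Complex.exp_eq_exp_ℂ, NormedSpace.map_exp φ hφ, map_smul,
    qomega]
  simp [φ]

theorem orderOf_qomega (hpure : μ.re = 0) (hunit : ‖μ‖ = 1) {n : ℕ} (hn : n ≠ 0) :
    orderOf (qomega n μ) = n := by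
  rw [qomega_eq_lift_exp hpure hunit]
  set φ := Complex.lift ⟨μ, mul_self_eq_neg_one hpure hunit⟩
  exact (orderOf_injective φ.toRingHom.toMonoidHom φ.toRingHom.injective _).trans
    (Complex.isPrimitiveRoot_exp n hn).inv.eq_orderOf.symm

theorem qomega_pow_self (hpure : μ.re = 0) (hunit : ‖μ‖ = 1) (n : ℕ) : qomega n μ ^ n = 1 := by
  obtain rfl | hn := eq_or_ne n 0
  · exact pow_zero _
  · simpa [orderOf_qomega hpure hunit hn] using pow_orderOf_eq_one (qomega n μ)

theorem star_qomega (hpure : μ.re = 0) (n : ℕ) : star (qomega n μ) = (qomega n μ)⁻¹ := by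
  rw [qomega, NormedSpace.star_exp, Quaternion.star_smul, star_eq_neg.mpr hpure, smul_neg,
    NormedSpace.exp_neg_of_mem_ball ℝ]
  simp [NormedSpace.expSeries_radius_eq_top]

theorem qdft_eq_smul_dftMatrix (n : ℕ) (μ : ℍ[ℝ]) :
    qdft n μ = (Real.sqrt n)⁻¹ • dftMatrix n (qomega n μ) :=
  rfl

theorem qdft_mul_circulant_ofReal (hpure : μ.re = 0) (hunit : ‖μ‖ = 1) {n : ℕ} (c : Fin n → ℝ) :
    qdft n μ * circulant (fun x => (c x : ℍ[ℝ])) =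
      diagonal (fun k : Fin n => ∑ v : Fin n, qomega n μ ^ ((k : ℕ) * v) * c v) * qdft n μ := by
  rw [qdft_eq_smul_dftMatrix, smul_mul, Matrix.mul_smul,
    dftMatrix_mul_circulant (qomega_pow_self hpure hunit n) fun v => (coe_commute _ _).symm]

theorem qdft_mul_conjTranspose (hpure : μ.re = 0) (hunit : ‖μ‖ = 1) (n : ℕ) :
    qdft n μ * (qdft n μ)ᴴ = 1 := by
  obtain rfl | hn := eq_or_ne n 0
  · exact Subsingleton.elim _ _
  rw [qdft_eq_smul_dftMatrix, conjTranspose_smul, smul_mul, Matrix.mul_smul,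
    dftMatrix_mul_conjTranspose (orderOf_qomega hpure hunit hn) (star_qomega hpure n),
    star_trivial, ← Nat.cast_smul_eq_nsmul ℝ, smul_smul, smul_smul, ← mul_inv,
    Real.mul_self_sqrt n.cast_nonneg, inv_mul_cancel₀ (Nat.cast_ne_zero.mpr hn), one_smul]

end qdft

theorem qdft_diagonalizes_real_circulant_general (n : ℕ) (μ : ℍ[ℝ])
    (hpure : μ.re = 0) (hunit : ‖μ‖ = 1) (c : Fin n → ℝ) :
    qdft n μ * Matrix.circulant (fun x => ((c x : ℝ) : ℍ[ℝ])) * (qdft n μ)ᴴ =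
      Matrix.diagonal (fun k : Fin n =>
        ∑ v : Fin n, (qomega n μ) ^ ((k : ℕ) * (v : ℕ)) * (c v : ℍ[ℝ]))
    ∧ ∀ k : Fin n,
        (∑ v : Fin n, (qomega n μ) ^ ((k : ℕ) * (v : ℕ)) * (c v : ℍ[ℝ])) =
          Real.sqrt n • (qdft n μ).mulVec (fun v => ((c v : ℝ) : ℍ[ℝ])) k := by
  refine ⟨?_, fun k => ?_⟩
  · rw [qdft_mul_circulant_ofReal hpure hunit, Matrix.mul_assoc,
      qdft_mul_conjTranspose hpure hunit, Matrix.mul_one]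
  · have hsqrt : Real.sqrt n ≠ 0 := Real.sqrt_ne_zero'.mpr (Nat.cast_pos.mpr k.pos)
    rw [qdft_eq_smul_dftMatrix, smul_mulVec, Pi.smul_apply, smul_inv_smul₀ hsqrt]
    simp [mulVec, dotProduct, dftMatrix]

/-- for a real vector `c`, the real circulant matrix `C = circ(c)` (viewed as a
quaternion matrix) satisfies `F_μ C F_μᴴ = Diag(λ₀,…,λ_{n−1})` with
`λ_k = Σ_{v=0}^{n−1} ω^{kv} c⁽ᵛ⁾`; equivalently, the diagonal equals `√n·(F_μ c)`. -/
theorem qdft_diagonalizes_real_circulant (n : ℕ) (hn : 1 ≤ n) (μ : ℍ[ℝ])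
    (hpure : μ.re = 0) (hunit : ‖μ‖ = 1) (c : Fin n → ℝ) :
    qdft n μ * Matrix.circulant (fun x => ((c x : ℝ) : ℍ[ℝ])) * (qdft n μ)ᴴ =
      Matrix.diagonal (fun k : Fin n =>
        ∑ v : Fin n, (qomega n μ) ^ ((k : ℕ) * (v : ℕ)) * (c v : ℍ[ℝ]))
    ∧ ∀ k : Fin n,
        (∑ v : Fin n, (qomega n μ) ^ ((k : ℕ) * (v : ℕ)) * (c v : ℍ[ℝ])) =
          Real.sqrt n • (qdft n μ).mulVec (fun v => ((c v : ℝ) : ℍ[ℝ])) k :=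
  qdft_diagonalizes_real_circulant_general n μ hpure hunit c
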